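/- arXiv:2003.10640 — 3 statements merged into one kernel-verified Lean document; each statement's English description precedes it below -/
import Mathlib

section
/- Let q be an indecomposable pattern. Then for all positive integers m and n, u_m(q)·u_n(q) ≤ u_{m+n}(q), where u_n(q) is the number of q-avoiding permutations of length n with a unique longest increasing subsequence. Concretely, if p is a q-avoiding permutation of length m with a ULIS and r is a q-avoiding permutation of length n with a ULIS, then the direct sum p ⊕ r (the permutation of length m+n acting as p on {1,…,m} and as a shifted copy of r on {m+1,…,m+n}) is q-avoiding and has a ULIS. -/
/-- `s` is the index set of an increasing subsequence of the word `f`. -/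
def IsIncSubseq {n : ℕ} {α : Type*} [Preorder α] (f : Fin n → α) (s : Finset (Fin n)) : Prop :=
  ∀ i ∈ s, ∀ j ∈ s, i < j → f i < f j

/-- `f` has a unique longest increasing subsequence. -/
def HasULIS {n : ℕ} {α : Type*} [Preorder α] (f : Fin n → α) : Prop :=
  ∃! s : Finset (Fin n), IsIncSubseq f s ∧
    ∀ t : Finset (Fin n), IsIncSubseq f t → t.card ≤ s.card

/-- `p` contains the pattern `q`. -/
def Contains {k n : ℕ} (q : Equiv.Perm (Fin k)) (p : Equiv.Perm (Fin n)) : Prop :=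
  ∃ f : Fin k → Fin n, StrictMono f ∧ ∀ a b : Fin k, p (f a) < p (f b) ↔ q a < q b

/-- `p` avoids the pattern `q`. -/
def Avoids {k n : ℕ} (q : Equiv.Perm (Fin k)) (p : Equiv.Perm (Fin n)) : Prop :=
  ¬ Contains q p

def pattern321 : Equiv.Perm (Fin 3) := ⟨![2,1,0], ![2,1,0], by decide, by decide⟩
def pattern231 : Equiv.Perm (Fin 3) := ⟨![1,2,0], ![2,0,1], by decide, by decide⟩
def pattern132 : Equiv.Perm (Fin 3) := ⟨![0,2,1], ![0,2,1], by decide, by decide⟩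
def pattern123 : Equiv.Perm (Fin 3) := Equiv.refl (Fin 3)

/-- the number of `q`-avoiding permutations of length `n` with a unique
longest increasing subsequence. -/
noncomputable def uNum {k : ℕ} (q : Equiv.Perm (Fin k)) (n : ℕ) : ℕ :=
  Nat.card {p : Equiv.Perm (Fin n) // Avoids q p ∧ HasULIS ⇑p}

/-- the number of `q`-avoiding involutions of length `n` with a unique
longest increasing subsequence. -/
noncomputable def iNum {k : ℕ} (q : Equiv.Perm (Fin k)) (n : ℕ) : ℕ :=
  Nat.card {p : Equiv.Perm (Fin n) // p⁻¹ = p ∧ Avoids q p ∧ HasULIS ⇑p}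

/-- A permutation is indecomposable if it cannot be cut into a (nonempty) prefix and
a (nonempty) suffix so that every entry of the prefix is smaller than every entry
of the suffix. -/
def Indecomposable {m : ℕ} (w : Equiv.Perm (Fin m)) : Prop :=
  ¬ ∃ j : ℕ, 1 ≤ j ∧ j < m ∧ ∀ a b : Fin m, (a : ℕ) < j → j ≤ (b : ℕ) → w a < w b

/-- The direct sum `p ⊕ r`: acts as `p` on the first `m` positions and as a shifted
copy of `r` on the last `n` positions. -/
def directSum {m n : ℕ} (p : Equiv.Perm (Fin m)) (r : Equiv.Perm (Fin n)) :
    Equiv.Perm (Fin (m + n)) :=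
  (finSumFinEquiv.symm.trans (Equiv.sumCongr p r)).trans finSumFinEquiv

/-!
Both statements come from the block structure of `p ⊕ r`. An increasing subsequence of a word
`u ++ v` in which every letter of `u` is below every letter of `v` is exactly the union of an
increasing subsequence of `u` and one of `v`, so the longest ones of `u ++ v` are the unions of a
longest one of `u` and a longest one of `v`; uniqueness passes to the sum. An occurrence of `q` in
`p ⊕ r` splits into an initial part in the `p`-block and a final part in the `r`-block, and every
entry of the first part is below every entry of the second; indecomposability of `q` forces one
part to be empty, so `q` occurs in `p` or in `r`. Finally `(p, r) ↦ p ⊕ r` is injective.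
-/

section Words

variable {α : Type*} {m n : ℕ}

lemma isIncSubseq_comp_iff [LinearOrder α] {β : Type*} [Preorder β] {e : α → β}
    (he : StrictMono e) {f : Fin n → α} {s : Finset (Fin n)} :
    IsIncSubseq (e ∘ f) s ↔ IsIncSubseq f s := by
  simp only [IsIncSubseq, Function.comp_apply, he.lt_iff_lt]

lemma hasULIS_comp_iff [LinearOrder α] {β : Type*} [Preorder β] {e : α → β}
    (he : StrictMono e) {f : Fin n → α} : HasULIS (e ∘ f) ↔ HasULIS f := by
  simp only [HasULIS, isIncSubseq_comp_iff he]

def finsetAppend (S : Finset (Fin m)) (T : Finset (Fin n)) : Finset (Fin (m + n)) :=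
  (S.disjSum T).map finSumFinEquiv.toEmbedding

@[simp]
lemma castAdd_mem_finsetAppend {S : Finset (Fin m)} {T : Finset (Fin n)} {i : Fin m} :
    Fin.castAdd n i ∈ finsetAppend S T ↔ i ∈ S := by
  simp [finsetAppend, ← finSumFinEquiv_apply_left]

@[simp]
lemma natAdd_mem_finsetAppend {S : Finset (Fin m)} {T : Finset (Fin n)} {j : Fin n} :
    Fin.natAdd m j ∈ finsetAppend S T ↔ j ∈ T := by
  simp [finsetAppend, ← finSumFinEquiv_apply_right]

lemma card_finsetAppend (S : Finset (Fin m)) (T : Finset (Fin n)) :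
    (finsetAppend S T).card = S.card + T.card := by
  rw [finsetAppend, Finset.card_map, Finset.card_disjSum]

lemma exists_eq_finsetAppend (W : Finset (Fin (m + n))) :
    ∃ S T, W = finsetAppend S T := by
  set U := W.map finSumFinEquiv.symm.toEmbedding
  refine ⟨U.toLeft, U.toRight, ?_⟩
  rw [finsetAppend, Finset.toLeft_disjSum_toRight, Finset.map_map]
  simp

lemma isIncSubseq_append_iff [Preorder α] {f : Fin m → α} {g : Fin n → α}
    (hfg : ∀ i j, f i < g j) {S : Finset (Fin m)} {T : Finset (Fin n)} :
    IsIncSubseq (Fin.append f g) (finsetAppend S T) ↔ IsIncSubseq f S ∧ IsIncSubseq g T := by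
  refine ⟨fun h => ⟨fun i hi j hj hij => ?_, fun i hi j hj hij => ?_⟩, fun ⟨hS, hT⟩ => ?_⟩
  · simpa using h _ (castAdd_mem_finsetAppend.2 hi) _ (castAdd_mem_finsetAppend.2 hj)
      ((Fin.strictMono_castAdd n) hij)
  · simpa using h _ (natAdd_mem_finsetAppend.2 hi) _ (natAdd_mem_finsetAppend.2 hj)
      ((Fin.strictMono_natAdd m) hij)
  intro x hx y hy hxy
  induction x using Fin.addCases <;> induction y using Fin.addCases
  all_goals simp only [castAdd_mem_finsetAppend, natAdd_mem_finsetAppend] at hx hy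
  all_goals simp only [Fin.append_left, Fin.append_right]
  · exact hS _ hx _ hy ((Fin.strictMono_castAdd n).lt_iff_lt.1 hxy)
  · exact hfg _ _
  · exact absurd hxy (by rw [Fin.lt_def]; simp; omega)
  · exact hT _ hx _ hy ((Fin.strictMono_natAdd m).lt_iff_lt.1 hxy)

lemma hasULIS_append [Preorder α] {f : Fin m → α} {g : Fin n → α} (hfg : ∀ i j, f i < g j)
    (hf : HasULIS f) (hg : HasULIS g) : HasULIS (Fin.append f g) := by
  obtain ⟨S, ⟨hS, hSmax⟩, hSuniq⟩ := hf
  obtain ⟨T, ⟨hT, hTmax⟩, hTuniq⟩ := hg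
  have hST := (isIncSubseq_append_iff hfg).2 ⟨hS, hT⟩
  refine ⟨finsetAppend S T, ⟨hST, fun W hW => ?_⟩, fun W ⟨hW, hWmax⟩ => ?_⟩
  all_goals obtain ⟨S', T', rfl⟩ := exists_eq_finsetAppend W
  all_goals obtain ⟨hS', hT'⟩ := (isIncSubseq_append_iff hfg).1 hW
  all_goals have hS'le := hSmax S' hS'
  all_goals have hT'le := hTmax T' hT'
  · rw [card_finsetAppend, card_finsetAppend]
    omega
  · have hge := hWmax _ hST
    rw [card_finsetAppend, card_finsetAppend] at hge
    rw [hSuniq S' ⟨hS', fun t ht => (hSmax t ht).trans (by omega)⟩,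
      hTuniq T' ⟨hT', fun t ht => (hTmax t ht).trans (by omega)⟩]

end Words

section Patterns

variable {k m n N : ℕ}

def IsOccurrence (q : Equiv.Perm (Fin k)) (p : Equiv.Perm (Fin N)) (f : Fin k → Fin N) : Prop :=
  StrictMono f ∧ ∀ a b, p (f a) < p (f b) ↔ q a < q b

lemma IsOccurrence.contains_of_forall_mem_range {q : Equiv.Perm (Fin k)}
    {p : Equiv.Perm (Fin m)} {p' : Equiv.Perm (Fin N)} {e : Fin m → Fin N} {f : Fin k → Fin N}
    (he : IsOccurrence p p' e) (hf : IsOccurrence q p' f) (hrange : ∀ a, f a ∈ Set.range e) :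
    Contains q p := by
  choose g hg using hrange
  refine ⟨g, fun a b hab => he.1.lt_iff_lt.1 ?_, fun a b => ?_⟩
  · simpa only [hg] using hf.1 hab
  · rw [← he.2, hg, hg, hf.2]

lemma Fin.exists_lt_iff_of_antitone {P : Fin k → Prop} (hP : Antitone P) :
    ∃ j ≤ k, ∀ a : Fin k, P a ↔ (a : ℕ) < j := by
  by_cases h : ∃ a, ¬ P a
  · obtain ⟨a₀, ha₀, hmin⟩ := WellFounded.has_min wellFounded_lt {a | ¬ P a} h
    refine ⟨a₀, a₀.is_le', fun a => ⟨fun ha => ?_, fun ha => ?_⟩⟩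
    · by_contra hle
      exact ha₀ (hP (Fin.le_def.2 (not_lt.1 hle)) ha)
    · by_contra hna
      exact hmin a hna ha
  · exact ⟨k, le_rfl, fun a => iff_of_true (not_exists_not.1 h a) a.isLt⟩

variable (p : Equiv.Perm (Fin m)) (r : Equiv.Perm (Fin n))

@[simp]
lemma directSum_castAdd (i : Fin m) : directSum p r (Fin.castAdd n i) = Fin.castAdd n (p i) := by
  simp [directSum]

@[simp]
lemma directSum_natAdd (j : Fin n) : directSum p r (Fin.natAdd m j) = Fin.natAdd m (r j) := by
  simp [directSum]

lemma coe_directSum : ⇑(directSum p r) = Fin.append (Fin.castAdd n ∘ p) (Fin.natAdd m ∘ r) := by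
  funext x
  induction x using Fin.addCases <;> simp

lemma directSum_injective : Function.Injective2 (directSum (m := m) (n := n)) := by
  intro p p' r r' h
  constructor <;> ext i : 1
  · simpa using congrArg (· (Fin.castAdd n i)) h
  · simpa using congrArg (· (Fin.natAdd m i)) h

lemma isOccurrence_castAdd_directSum : IsOccurrence p (directSum p r) (Fin.castAdd n) :=
  ⟨Fin.strictMono_castAdd n, fun a b => by simp [(Fin.strictMono_castAdd n).lt_iff_lt]⟩

lemma isOccurrence_natAdd_directSum : IsOccurrence r (directSum p r) (Fin.natAdd m) :=
  ⟨Fin.strictMono_natAdd m, fun a b => by simp⟩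

lemma directSum_lt_directSum {x y : Fin (m + n)} (hx : (x : ℕ) < m) (hy : m ≤ (y : ℕ)) :
    directSum p r x < directSum p r y := by
  induction x using Fin.addCases <;> induction y using Fin.addCases
  all_goals simp only [Fin.val_castAdd, Fin.val_natAdd] at hx hy
  all_goals simp only [directSum_castAdd, directSum_natAdd, Fin.lt_def, Fin.val_castAdd,
    Fin.val_natAdd]
  all_goals omega

lemma hasULIS_directSum (hp : HasULIS ⇑p) (hr : HasULIS ⇑r) : HasULIS ⇑(directSum p r) := by
  rw [coe_directSum]
  refine hasULIS_append (fun i j => ?_) ((hasULIS_comp_iff (Fin.strictMono_castAdd n)).2 hp)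
    ((hasULIS_comp_iff (Fin.strictMono_natAdd m)).2 hr)
  simp only [Function.comp_apply, Fin.lt_def, Fin.val_castAdd, Fin.val_natAdd]
  omega

lemma contains_or_contains_of_contains_directSum {q : Equiv.Perm (Fin k)}
    (hq : Indecomposable q) (h : Contains q (directSum p r)) : Contains q p ∨ Contains q r := by
  obtain ⟨f, hf⟩ := h
  obtain ⟨j, hjk, hj⟩ := Fin.exists_lt_iff_of_antitone (P := fun a => (f a : ℕ) < m)
    fun a b hab hb => lt_of_le_of_lt (Fin.le_def.1 (hf.1.monotone hab)) hb
  rcases Nat.eq_zero_or_pos j with rfl | hj0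
  · refine Or.inr ((isOccurrence_natAdd_directSum p r).contains_of_forall_mem_range hf
      fun a => ?_)
    rw [Fin.range_natAdd]
    exact not_lt.1 fun h => Nat.not_lt_zero _ ((hj a).1 h)
  rcases hjk.eq_or_lt with rfl | hjk
  · exact Or.inl ((isOccurrence_castAdd_directSum p r).contains_of_forall_mem_range hf
      fun a => ⟨(f a).castLT ((hj a).2 a.isLt), Fin.castAdd_castLT n (f a) _⟩)
  · -- the cut at `j` would decompose `q`
    exact absurd ⟨j, hj0, hjk, fun a b ha hb => (hf.2 a b).1 (directSum_lt_directSum p r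
      ((hj a).2 ha) (not_lt.1 fun h => (not_lt.2 hb) ((hj b).1 h)))⟩ hq

lemma avoids_directSum {q : Equiv.Perm (Fin k)} (hq : Indecomposable q)
    (hp : Avoids q p) (hr : Avoids q r) : Avoids q (directSum p r) := fun h =>
  (contains_or_contains_of_contains_directSum p r hq h).elim hp hr

end Patterns

lemma uNum_mul_uNum_le {k : ℕ} {q : Equiv.Perm (Fin k)} (hq : Indecomposable q) (m n : ℕ) :
    uNum q m * uNum q n ≤ uNum q (m + n) := by
  rw [uNum, uNum, uNum, ← Nat.card_prod]
  refine Nat.card_le_card_of_injective (fun x => ⟨directSum x.1.1 x.2.1,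
    avoids_directSum _ _ hq x.1.2.1 x.2.2.1, hasULIS_directSum _ _ x.1.2.2 x.2.2.2⟩) ?_
  rintro ⟨⟨p, _⟩, ⟨r, _⟩⟩ ⟨⟨p', _⟩, ⟨r', _⟩⟩ h
  obtain ⟨rfl, rfl⟩ := directSum_injective (congrArg Subtype.val h)
  rfl

/-- For an indecomposable pattern `q`, `u_m(q)·u_n(q) ≤ u_{m+n}(q)` for all positive
`m, n`; concretely, direct sums of `q`-avoiding permutations with a ULIS are
`q`-avoiding and have a ULIS. -/
theorem uNum_supermultiplicative {k : ℕ} (q : Equiv.Perm (Fin k))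
    (hq : Indecomposable q) :
    (∀ m n : ℕ, 1 ≤ m → 1 ≤ n → uNum q m * uNum q n ≤ uNum q (m + n)) ∧
    (∀ m n : ℕ, ∀ p : Equiv.Perm (Fin m), ∀ r : Equiv.Perm (Fin n),
      Avoids q p → HasULIS ⇑p → Avoids q r → HasULIS ⇑r →
        Avoids q (directSum p r) ∧ HasULIS ⇑(directSum p r)) :=
  ⟨fun m n _ _ => uNum_mul_uNum_le hq m n, fun _ _ p r hpa hpu hra hru =>
    ⟨avoids_directSum p r hq hpa hra, hasULIS_directSum p r hpu hru⟩⟩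
end

section
/- For every positive integer n, the only 231-avoiding involution of length n that has a unique longest increasing subsequence is the identity permutation; consequently i_n(231) = 1 for all n ≥ 1. -/
section IncSubseq

variable {n : ℕ} {α : Type*} [Preorder α] {f : Fin n → α}

lemma IsIncSubseq.mono {s t : Finset (Fin n)} (hs : IsIncSubseq f s) (hts : t ⊆ s) :
    IsIncSubseq f t :=
  fun i hi j hj => hs i (hts hi) j (hts hj)

lemma IsIncSubseq.insert {s : Finset (Fin n)} (hs : IsIncSubseq f s) {b : Fin n}
    (hb : ∀ k ∈ s, (k < b → f k < f b) ∧ (b < k → f b < f k)) :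
    IsIncSubseq f (insert b s) := by
  intro i hi j hj hij
  obtain rfl | his := Finset.mem_insert.mp hi
  · obtain rfl | hjs := Finset.mem_insert.mp hj
    · exact absurd hij (lt_irrefl _)
    · exact (hb j hjs).2 hij
  · obtain rfl | hjs := Finset.mem_insert.mp hj
    · exact (hb i his).1 hij
    · exact hs i his j hjs hij

lemma IsIncSubseq.eq_of_strictAntiOn {s B : Finset (Fin n)} (hs : IsIncSubseq f s)
    (hB : StrictAntiOn f B) {i j : Fin n} (his : i ∈ s) (hjs : j ∈ s) (hiB : i ∈ B)
    (hjB : j ∈ B) : i = j := by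
  rcases lt_trichotomy i j with h | h | h
  · exact absurd (hs i his j hjs h) (hB hiB hjB h).asymm
  · exact h
  · exact absurd (hs j hjs i his h) (hB hjB hiB h).asymm

lemma hasULIS_of_strictMono (hf : StrictMono f) : HasULIS f := by
  refine ⟨Finset.univ, ⟨fun i _ j _ hij => hf hij, fun t _ => t.card_le_univ⟩, ?_⟩
  rintro t ⟨-, htmax⟩
  exact Finset.eq_univ_of_card t <|
    le_antisymm t.card_le_univ (by simpa using htmax Finset.univ fun i _ j _ hij => hf hij)

theorem not_hasULIS_of_strictAntiOn {B : Finset (Fin n)} (hcard : 1 < B.card)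
    (hanti : StrictAntiOn f B)
    (hcomp : ∀ i ∈ B, ∀ k ∉ B, (k < i → f k < f i) ∧ (i < k → f i < f k)) :
    ¬ HasULIS f := by
  rintro ⟨s, ⟨hs, hmax⟩, huniq⟩
  by_cases hsB : ∃ c ∈ s, c ∈ B
  · obtain ⟨c, hcs, hcB⟩ := hsB
    obtain ⟨d, hdB, hdc⟩ := Finset.exists_mem_ne hcard c
    have hds : d ∉ s := fun hds => hdc (hs.eq_of_strictAntiOn hanti hds hcs hdB hcB)
    have ht : IsIncSubseq f (insert d (s.erase c)) := by
      refine (hs.mono (s.erase_subset c)).insert fun k hk => hcomp d hdB k fun hkB => ?_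
      obtain ⟨hkc, hks⟩ := Finset.mem_erase.mp hk
      exact hkc (hs.eq_of_strictAntiOn hanti hks hcs hkB hcB)
    have hteq := huniq _ ⟨ht, fun t htinc => (hmax t htinc).trans_eq <| by
      rw [Finset.card_insert_of_notMem fun h => hds (Finset.mem_of_mem_erase h),
        Finset.card_erase_add_one hcs]⟩
    exact hds (hteq ▸ Finset.mem_insert_self d _)
  · push Not at hsB
    obtain ⟨b, hbB⟩ := Finset.card_pos.mp (by omega : 0 < B.card)
    have ht : IsIncSubseq f (insert b s) :=
      hs.insert fun k hk => hcomp b hbB k (hsB k hk)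
    have := hmax _ ht
    rw [Finset.card_insert_of_notMem fun hbs => hsB b hbs hbB] at this
    omega

end IncSubseq

lemma avoids_of_strictMono {k n : ℕ} {q : Equiv.Perm (Fin k)} {p : Equiv.Perm (Fin n)}
    (hq : ¬ StrictMono q) (hp : StrictMono p) : Avoids q p := by
  rintro ⟨f, hf, hiff⟩
  exact hq fun a b hab => (hiff a b).mp (hp (hf hab))

lemma not_strictMono_pattern231 : ¬ StrictMono pattern231 :=
  fun h => absurd (h (by decide : (1 : Fin 3) < 2)) (by decide)

section Involution

variable {n : ℕ} {p : Equiv.Perm (Fin n)}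

lemma Avoids.not_231 (h : Avoids pattern231 p) {i j k : Fin n} (hij : i < j) (hjk : j < k)
    (hki : p k < p i) (hij' : p i < p j) : False := by
  refine h ⟨![i, j, k], ?_, ?_⟩
  · intro a b hab
    fin_cases a <;> fin_cases b <;> simp at hab ⊢ <;> order
  · intro a b
    fin_cases a <;> fin_cases b <;> simp [pattern231] <;> order

lemma Avoids.not_312 (hp : Function.Involutive p) (h : Avoids pattern231 p) {i j k : Fin n}
    (hij : i < j) (hjk : j < k) (hjk' : p j < p k) (hki : p k < p i) : False :=
  h.not_231 hjk' hki (by rwa [hp, hp]) (by rwa [hp, hp])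

lemma le_apply_of_le (hp : Function.Involutive p) {a x : Fin n} (hfix : ∀ y < a, p y = y)
    (hx : a ≤ x) : a ≤ p x := by
  by_contra! hxa
  have hx' : x = p x := (hp x).symm.trans (hfix (p x) hxa)
  exact hxa.not_ge (hx' ▸ hx)

theorem not_hasULIS_of_avoids_231 (hp : Function.Involutive p) (havoid : Avoids pattern231 p)
    {a : Fin n} (ha : p a ≠ a) (hfix : ∀ y < a, p y = y) : ¬ HasULIS p := by
  have hlt : a < p a := (le_apply_of_le hp hfix le_rfl).lt_of_ne' ha
  have hmaps : ∀ x ∈ Finset.Icc a (p a), p x ∈ Finset.Icc a (p a) := by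
    intro x hx
    obtain ⟨hax, hxa⟩ := Finset.mem_Icc.mp hx
    refine Finset.mem_Icc.mpr ⟨le_apply_of_le hp hfix hax, not_lt.mp fun hpx => ?_⟩
    have hxa' : x ≠ a := by rintro rfl; exact hpx.false
    have hxpa : x ≠ p a := by rintro rfl; exact (hp a ▸ hpx).asymm hlt
    exact havoid.not_231 (hax.lt_of_ne' hxa') (hxa.lt_of_ne hxpa) (by rwa [hp]) hpx
  refine not_hasULIS_of_strictAntiOn (B := Finset.Icc a (p a)) ?_ ?_ ?_
  · rw [Fin.card_Icc]
    omega
  · intro i hi j hj hij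
    have hai := (Finset.mem_Icc.mp hi).1
    by_contra! hle
    have hij' : p i < p j := hle.lt_of_ne (p.injective.ne hij.ne)
    have hjpa : p j < p a :=
      (Finset.mem_Icc.mp (hmaps j hj)).2.lt_of_ne (p.injective.ne (hai.trans_lt hij).ne')
    rcases hai.eq_or_lt with rfl | hai
    · exact hjpa.asymm hij'
    · exact havoid.not_312 hp hai hij hij' hjpa
  · intro i hi k hk
    obtain ⟨hai, hipa⟩ := Finset.mem_Icc.mp hi
    have hpi := Finset.mem_Icc.mp (hmaps i hi)
    have hout : ∀ {y}, y ∉ Finset.Icc a (p a) → y < a ∨ p a < y := fun hy => by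
      rw [Finset.mem_Icc, not_and_or, not_le, not_le] at hy
      exact hy
    refine ⟨fun hki => ?_, fun hik => ?_⟩
    · have hka : k < a := (hout hk).resolve_right (hki.trans_le hipa).not_gt
      rw [hfix k hka]
      exact hka.trans_le hpi.1
    · have hak : a ≤ k := hai.trans hik.le
      have hpk : p k ∉ Finset.Icc a (p a) := fun h =>
        (hout hk).elim hak.not_gt fun hpak => hpak.not_ge (Finset.mem_Icc.mp (hp k ▸ hmaps _ h)).2
      exact hpi.2.trans_lt ((hout hpk).resolve_left (le_apply_of_le hp hfix hak).not_gt)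

end Involution

theorem eq_one_of_avoids_231_of_hasULIS {n : ℕ} {p : Equiv.Perm (Fin n)} (hinv : p⁻¹ = p)
    (havoid : Avoids pattern231 p) (hulis : HasULIS p) : p = 1 := by
  have hp : Function.Involutive p := fun x => by nth_rw 1 [← hinv]; simp
  by_contra hne
  obtain ⟨x, hx⟩ : ∃ x, p x ≠ x := by simpa [Equiv.ext_iff] using hne
  obtain ⟨a, ha, hmin⟩ := wellFounded_lt.has_min {y | p y ≠ y} ⟨x, hx⟩
  exact not_hasULIS_of_avoids_231 hp havoid ha (fun y hy => not_not.mp fun h => hmin y h hy) hulis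

theorem i231_eq_one_general (n : ℕ) :
    (∀ p : Equiv.Perm (Fin n),
      (p⁻¹ = p ∧ Avoids pattern231 p ∧ HasULIS ⇑p) ↔ p = 1) ∧
    iNum pattern231 n = 1 := by
  have hchar : ∀ p : Equiv.Perm (Fin n),
      (p⁻¹ = p ∧ Avoids pattern231 p ∧ HasULIS ⇑p) ↔ p = 1 := by
    refine fun p => ⟨fun ⟨hinv, havoid, hulis⟩ => ?_, ?_⟩
    · exact eq_one_of_avoids_231_of_hasULIS hinv havoid hulis
    · rintro rfl
      exact ⟨inv_one, avoids_of_strictMono not_strictMono_pattern231 strictMono_id,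
        hasULIS_of_strictMono strictMono_id⟩
  refine ⟨hchar, ?_⟩
  simp only [iNum, hchar]
  exact Nat.card_unique

/-- For every `n ≥ 1`, the only 231-avoiding involution of length `n` with a unique
longest increasing subsequence is the identity permutation; consequently
`i_n(231) = 1`. -/
theorem i231_eq_one (n : ℕ) (hn : 1 ≤ n) :
    (∀ p : Equiv.Perm (Fin n),
      (p⁻¹ = p ∧ Avoids pattern231 p ∧ HasULIS ⇑p) ↔ p = 1) ∧
    iNum pattern231 n = 1 :=
  i231_eq_one_general n
end

section
/- For every positive integer n, the only 321-avoiding involution of length n that has a unique longest increasing subsequence is the identity permutation; consequently i_n(321) = 1 for all n ≥ 1. -/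
/-!
Let `p` be a 321-avoiding involution with unique longest increasing subsequence `s`.
Since `p` is an involution, `p(s)` is again a longest increasing subsequence, so `p(s) = s`,
and an increasing subsequence mapped to itself by an involution consists of fixed points.
Thus `s` lies in the set of weak excedances `i ≤ p i`, which for a 321-avoiding involution is
itself increasing; by maximality it equals `s`, so every weak excedance is fixed. Every `i` with
`p i < i` would have the weak excedance `p i`, so there is no such `i` and `p = 1`.
-/

def IsLongestIncSubseq {n : ℕ} {α : Type*} [Preorder α] (f : Fin n → α) (s : Finset (Fin n)) :
    Prop :=
  IsIncSubseq f s ∧ ∀ t : Finset (Fin n), IsIncSubseq f t → t.card ≤ s.card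

theorem hasULIS_iff {n : ℕ} {α : Type*} [Preorder α] {f : Fin n → α} :
    HasULIS f ↔ ∃! s, IsLongestIncSubseq f s :=
  Iff.rfl

theorem isIncSubseq_iff_strictMonoOn {n : ℕ} {α : Type*} [Preorder α] {f : Fin n → α}
    {s : Finset (Fin n)} : IsIncSubseq f s ↔ StrictMonoOn f s :=
  Iff.rfl

theorem hasULIS_of_strictMono_s11 {n : ℕ} {α : Type*} [Preorder α] {f : Fin n → α}
    (hf : StrictMono f) : HasULIS f := by
  have huniv : IsIncSubseq f Finset.univ := fun i _ j _ hij => hf hij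
  refine ⟨Finset.univ, ⟨huniv, fun t _ => t.card_le_univ⟩, fun t ht => ?_⟩
  exact Finset.eq_univ_of_card t (le_antisymm t.card_le_univ (ht.2 _ huniv))

theorem Equiv.Perm.involutive_of_inv_eq_self {α : Type*} {p : Equiv.Perm α} (hp : p⁻¹ = p) :
    Function.Involutive p := fun x => by
  simpa [hp] using (Equiv.Perm.inv_eq_iff_eq (f := p)).2 rfl

section Involution

variable {n : ℕ} {p : Equiv.Perm (Fin n)}

theorem IsIncSubseq.image_perm {s : Finset (Fin n)} (hs : IsIncSubseq p s) :
    IsIncSubseq ⇑p⁻¹ (s.image p) := by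
  simp only [IsIncSubseq, Finset.forall_mem_image, Equiv.Perm.coe_inv, Equiv.symm_apply_apply]
  intro i hi j hj hij
  exact (isIncSubseq_iff_strictMonoOn.1 hs).lt_iff_lt hi hj |>.1 hij

theorem IsLongestIncSubseq.image_of_inv_eq_self (hp : p⁻¹ = p) {s : Finset (Fin n)}
    (hs : IsLongestIncSubseq p s) : IsLongestIncSubseq p (s.image p) := by
  refine ⟨by simpa only [hp] using hs.1.image_perm, fun t ht => ?_⟩
  rw [Finset.card_image_of_injective s p.injective]
  exact hs.2 t ht

theorem IsIncSubseq.apply_eq_self_of_mapsTo {f : Fin n → Fin n} (hf : Function.Involutive f)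
    {s : Finset (Fin n)} (hs : IsIncSubseq f s) (hmaps : ∀ i ∈ s, f i ∈ s) :
    ∀ i ∈ s, f i = i := by
  intro i hi
  have hlt : i < f i ↔ f i < i := by
    rw [← (isIncSubseq_iff_strictMonoOn.1 hs).lt_iff_lt hi (hmaps i hi), hf i]
  exact le_antisymm (not_lt.1 fun h => h.asymm (hlt.1 h)) (not_lt.1 fun h => h.asymm (hlt.2 h))

theorem contains_pattern321_of_lt {i j k : Fin n} (hij : i < j) (hjk : j < k)
    (hji : p j < p i) (hkj : p k < p j) : Contains pattern321 p := by
  refine ⟨![i, j, k], ?_, ?_⟩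
  · refine Fin.strictMono_iff_lt_succ.2 fun a => ?_
    fin_cases a
    exacts [hij, hjk]
  · intro a b
    fin_cases a <;> fin_cases b <;>
      simp only [pattern321, Equiv.coe_fn_mk, Fin.isValue, Fin.zero_eta, Fin.mk_one, Fin.reduceFinMk,
        Matrix.cons_val, Matrix.cons_val_zero, Matrix.cons_val_one, Fin.reduceLT, Fin.lt_one_iff,
        Fin.reduceEq, lt_self_iff_false, not_lt_zero, zero_lt_one, iff_true, iff_false, not_lt] <;>
      order

def weakExcedances (p : Equiv.Perm (Fin n)) : Finset (Fin n) :=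
  Finset.univ.filter fun i => i ≤ p i

theorem mem_weakExcedances {i : Fin n} : i ∈ weakExcedances p ↔ i ≤ p i := by
  simp [weakExcedances]

theorem isIncSubseq_weakExcedances (hp : Function.Involutive p) (havoid : Avoids pattern321 p) :
    IsIncSubseq p (weakExcedances p) := by
  intro i hi j hj hij
  rw [mem_weakExcedances] at hi hj
  by_contra hle
  have hji : p j < p i := lt_of_le_of_ne (not_lt.1 hle) (p.injective.ne hij.ne')
  -- The positions `i < j < p i` carry the values `p i > p j > p (p i) = i`.
  refine havoid (contains_pattern321_of_lt hij (hj.trans_lt hji) hji ?_)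
  rw [hp i]
  exact hij.trans_le hj

theorem eq_one_of_forall_mem_weakExcedances (hp : Function.Involutive p)
    (hfix : ∀ i ∈ weakExcedances p, p i = i) : p = 1 := by
  ext i
  by_cases hi : i ≤ p i
  · exact congrArg Fin.val (hfix i (mem_weakExcedances.2 hi))
  · have hpi : p i ∈ weakExcedances p := by
      rw [mem_weakExcedances, hp i]
      exact (not_le.1 hi).le
    exact absurd ((hp i).symm.trans (hfix (p i) hpi)).le hi

theorem eq_one_of_inv_eq_self_of_avoids_pattern321 (hp : p⁻¹ = p)
    (havoid : Avoids pattern321 p) (hulis : HasULIS p) : p = 1 := by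
  have hinv := Equiv.Perm.involutive_of_inv_eq_self hp
  obtain ⟨s, hs, huniq⟩ := hasULIS_iff.1 hulis
  have himage : s.image p = s := huniq _ (hs.image_of_inv_eq_self hp)
  have hfix : ∀ i ∈ s, p i = i :=
    hs.1.apply_eq_self_of_mapsTo hinv fun i hi => himage ▸ Finset.mem_image_of_mem p hi
  have hsub : s ⊆ weakExcedances p := fun i hi => mem_weakExcedances.2 (hfix i hi).ge
  have hs_eq : s = weakExcedances p :=
    Finset.eq_of_subset_of_card_le hsub (hs.2 _ (isIncSubseq_weakExcedances hinv havoid))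
  exact eq_one_of_forall_mem_weakExcedances hinv (hs_eq ▸ hfix)

end Involution

theorem avoids_pattern321_one {n : ℕ} : Avoids pattern321 (1 : Equiv.Perm (Fin n)) := by
  rintro ⟨f, hf, hpat⟩
  have h10 : pattern321 1 < pattern321 0 := by decide
  exact (hf (show (0 : Fin 3) < 1 by decide)).asymm ((hpat 1 0).2 h10)

theorem i321_eq_one_general (n : ℕ) :
    (∀ p : Equiv.Perm (Fin n),
      (p⁻¹ = p ∧ Avoids pattern321 p ∧ HasULIS ⇑p) ↔ p = 1) ∧
    iNum pattern321 n = 1 := by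
  have key : ∀ p : Equiv.Perm (Fin n), (p⁻¹ = p ∧ Avoids pattern321 p ∧ HasULIS ⇑p) ↔ p = 1 :=
    fun p => ⟨fun ⟨hp, havoid, hulis⟩ => eq_one_of_inv_eq_self_of_avoids_pattern321 hp havoid hulis,
      by rintro rfl; exact ⟨inv_one, avoids_pattern321_one, hasULIS_of_strictMono_s11 strictMono_id⟩⟩
  refine ⟨key, ?_⟩
  simp only [iNum, key]
  exact Nat.card_unique

/-- For every `n ≥ 1`, the only 321-avoiding involution of length `n` with a unique
longest increasing subsequence is the identity permutation; consequently
`i_n(321) = 1`. -/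
theorem i321_eq_one (n : ℕ) (hn : 1 ≤ n) :
    (∀ p : Equiv.Perm (Fin n),
      (p⁻¹ = p ∧ Avoids pattern321 p ∧ HasULIS ⇑p) ↔ p = 1) ∧
    iNum pattern321 n = 1 :=
  i321_eq_one_general n
end
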